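/- The set {2^n : n ∈ ℕ} ∪ {2^n + 2n − 1 : n ∈ ℕ} is an I₀ set. -/

import Mathlib

/-- A sequence `ψ : ℕ → ℂ` is almost periodic if it is a uniform limit of
trigonometric polynomials. -/
def AlmostPeriodic (ψ : ℕ → ℂ) : Prop :=
  ∀ ε : ℝ, 0 < ε → ∃ (m : ℕ) (c : Fin m → ℂ) (α : Fin m → ℝ),
    ∀ n : ℕ, ‖ψ n - ∑ j, c j * Complex.exp (2 * (Real.pi : ℂ) * Complex.I * (n : ℂ) * (α j : ℂ))‖ < ε

/-- A set `E ⊆ ℕ` is an `I₀` set if every bounded function on `E` extends to an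
almost periodic sequence on `ℕ`. -/
def IsI0Set (E : Set ℕ) : Prop :=
  ∀ b : ℕ → ℂ, (∃ C : ℝ, ∀ n ∈ E, ‖b n‖ ≤ C) →
    ∃ ψ : ℕ → ℂ, AlmostPeriodic ψ ∧ ∀ r ∈ E, ψ r = b r

/-!
A set `E` is `I₀` as soon as every `v` with `‖v‖ ≤ 1` on `E` is approximated within `1/2` on `E`
by a trigonometric polynomial bounded by `1`: iterating on the doubled error yields an exact
interpolant as a uniformly convergent series of trigonometric polynomials.

Such approximations exist when `E` is covered by finitely many disjoint periodic sets (whose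
indicators are trigonometric polynomials) each meeting `E` in a `1/2`-Kronecker set: write
`v = (u₁ + u₂) / 2` with `|u₁| = |u₂| = 1` and approximate each `uᵢ` by one character per piece.
Hadamard sets of ratio `q` are `2π/(q-1)`-Kronecker by a nested interval argument. The powers
`2 ^ n` split by `n % 7` into Hadamard sets of ratio `128`, told apart mod `127`; the odd numbers
`2 ^ n + 2 * n - 1` split by their residue mod `256`, and equal residues force `n' ≥ n + 7`.
-/

open Real FourierTransform Submodule Pointwise Function

noncomputable section

def character (α : ℝ) : ℕ → ℂ := fun n => 𝐞 (n * α)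

def trigPoly : Submodule ℂ (ℕ → ℂ) := span ℂ (Set.range character)

theorem character_mem_trigPoly (α : ℝ) : character α ∈ trigPoly := subset_span ⟨α, rfl⟩

theorem mul_mem_trigPoly {f g : ℕ → ℂ} (hf : f ∈ trigPoly) (hg : g ∈ trigPoly) :
    f * g ∈ trigPoly := by
  have hmul : Set.range character * Set.range character ⊆ Set.range character := by
    rintro _ ⟨_, ⟨α, rfl⟩, _, ⟨β, rfl⟩, rfl⟩
    refine ⟨α + β, funext fun n => ?_⟩
    simp [character, mul_add, AddChar.map_add_eq_mul]
  have := mul_mem_mul hf hg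
  rw [trigPoly, span_mul_span] at this
  exact span_mono hmul this

theorem periodic_mem_trigPoly {f : ℕ → ℂ} {q : ℕ} [NeZero q] (hf : Periodic f q) :
    f ∈ trigPoly := by
  set Φ : ZMod q → ℂ := fun j => f j.val
  have hchar : ∀ (k : ZMod q) (n : ℕ),
      ZMod.stdAddChar (k * (n : ZMod q)) = character (k.val / q) n := by
    intro k n
    rw [show k * (n : ZMod q) = ((k.val * n : ℕ) : ZMod q) by
        push_cast [ZMod.natCast_zmod_val]; rfl,
      ZMod.stdAddChar_apply, ZMod.toCircle_natCast, character, fourierChar_apply]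
    congr 1
    push_cast
    field_simp
  have hf_eq : f = ∑ k : ZMod q, ((q : ℂ)⁻¹ * ZMod.dft Φ k) • character (k.val / q) := by
    ext n
    calc f n = Φ n := by simp only [Φ, ZMod.val_natCast, hf.map_mod_nat]
      _ = ZMod.dft.symm (ZMod.dft Φ) n := by rw [LinearEquiv.symm_apply_apply]
      _ = _ := by
        rw [ZMod.invDFT_apply, Finset.sum_apply, Finset.smul_sum]
        refine Finset.sum_congr rfl fun k _ => ?_
        rw [smul_eq_mul, hchar, Pi.smul_apply, smul_eq_mul]
        ring
  rw [hf_eq]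
  exact sum_mem fun k _ => smul_mem _ _ (character_mem_trigPoly _)

theorem almostPeriodic_iff {ψ : ℕ → ℂ} :
    AlmostPeriodic ψ ↔ ∀ ε > 0, ∃ f ∈ trigPoly, ∀ n, ‖ψ n - f n‖ < ε := by
  have hchar : ∀ (α : ℝ) (n : ℕ),
      Complex.exp (2 * (π : ℂ) * Complex.I * n * α) = character α n := by
    intro α n
    rw [character, fourierChar_apply]
    congr 1
    push_cast
    ring
  refine ⟨fun h ε hε => ?_, fun h ε hε => ?_⟩
  · obtain ⟨m, c, α, hψ⟩ := h ε hε
    refine ⟨∑ j, c j • character (α j),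
      sum_mem fun j _ => smul_mem _ _ (character_mem_trigPoly _), fun n => ?_⟩
    simpa [hchar] using hψ n
  · obtain ⟨f, hf, hψf⟩ := h ε hε
    obtain ⟨m, c, g, rfl⟩ := mem_span_set'.mp hf
    choose α hα using fun j => (g j).2
    refine ⟨m, c, α, fun n => ?_⟩
    simpa [hchar, hα] using hψf n

theorem AlmostPeriodic.const_mul {ψ : ℕ → ℂ} (hψ : AlmostPeriodic ψ) (c : ℂ) :
    AlmostPeriodic fun n => c * ψ n := by
  rw [almostPeriodic_iff] at hψ ⊢
  intro ε hε
  obtain ⟨f, hf, hψf⟩ := hψ (ε / (‖c‖ + 1)) (by positivity)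
  refine ⟨c • f, smul_mem _ _ hf, fun n => ?_⟩
  calc ‖c * ψ n - (c • f) n‖ = ‖c‖ * ‖ψ n - f n‖ := by
        rw [Pi.smul_apply, smul_eq_mul, ← mul_sub, norm_mul]
    _ ≤ (‖c‖ + 1) * ‖ψ n - f n‖ := by gcongr; linarith
    _ < (‖c‖ + 1) * (ε / (‖c‖ + 1)) := by gcongr; exact hψf n
    _ = ε := by field_simp

section Approximation

variable {E : Set ℕ}
  (h : ∀ v : ℕ → ℂ, ∃ P ∈ trigPoly, (∀ m, ‖P m‖ ≤ 1) ∧ ∀ m ∈ E, ‖v m‖ ≤ 1 → ‖v m - P m‖ ≤ 1 / 2)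
include h

theorem exists_almostPeriodic_eqOn_of_approx {b : ℕ → ℂ} (hb : ∀ m ∈ E, ‖b m‖ ≤ 1) :
    ∃ ψ, AlmostPeriodic ψ ∧ ∀ m ∈ E, ψ m = b m := by
  choose P hP hP_le hP_approx using h
  -- `v j` is the rescaled error `2 ^ j • (b - S j)` left after `j` approximation steps
  let v : ℕ → ℕ → ℂ := fun j => (fun w => (2 : ℂ) • (w - P w))^[j] b
  have hv_succ : ∀ j, v (j + 1) = (2 : ℂ) • (v j - P (v j)) := fun j =>
    Function.iterate_succ_apply' _ j b
  have hv_le : ∀ j, ∀ m ∈ E, ‖v j m‖ ≤ 1 := by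
    intro j
    induction j with
    | zero => exact hb
    | succ j ih =>
      intro m hm
      rw [hv_succ, Pi.smul_apply, norm_smul, Pi.sub_apply]
      have := hP_approx (v j) m hm (ih m hm)
      norm_num
      linarith
  let S : ℕ → ℕ → ℂ := fun N => ∑ j ∈ Finset.range N, ((2 : ℂ) ^ j)⁻¹ • P (v j)
  have hS_mem : ∀ N, S N ∈ trigPoly := fun N =>
    sum_mem fun j _ => smul_mem _ _ (hP _)
  have hS_err : ∀ N m, b m - S N m = v N m / 2 ^ N := by
    intro N m
    induction N with
    | zero => simp [S, v]
    | succ N ih =>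
      simp only [S, Finset.sum_range_succ, Pi.add_apply] at ih ⊢
      rw [← sub_sub, ih, hv_succ]
      simp only [Pi.smul_apply, Pi.sub_apply, smul_eq_mul]
      field_simp
      ring
  have hS_step : ∀ m N, dist (S N m) (S (N + 1) m) ≤ 2 / 2 / 2 ^ N := by
    intro m N
    rw [dist_eq_norm, ← neg_sub, norm_neg]
    simp only [S, Finset.sum_range_succ, Pi.add_apply, add_sub_cancel_left, Pi.smul_apply,
      smul_eq_mul, norm_mul, norm_inv, norm_pow]
    norm_num
    exact hP_le (v N) m
  choose ψ hψ using fun m =>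
    cauchySeq_tendsto_of_complete (cauchySeq_of_le_geometric_two (hS_step m))
  refine ⟨ψ, almostPeriodic_iff.mpr fun ε hε => ?_, fun m hm => ?_⟩
  · obtain ⟨N, hN⟩ := exists_pow_lt_of_lt_one (half_pos hε) (by norm_num : (1 / 2 : ℝ) < 1)
    refine ⟨S N, hS_mem N, fun n => ?_⟩
    calc ‖ψ n - S N n‖ = dist (S N n) (ψ n) := by rw [dist_comm, dist_eq_norm]
      _ ≤ 2 / 2 ^ N := dist_le_of_le_geometric_two_of_tendsto (hS_step n) (hψ n) N
      _ < ε := by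
        rw [one_div_pow] at hN
        linarith [show 2 / (2 : ℝ) ^ N = 2 * (1 / 2 ^ N) by ring]
  · refine tendsto_nhds_unique (hψ m) (tendsto_iff_norm_sub_tendsto_zero.mpr ?_)
    refine squeeze_zero (fun _ => norm_nonneg _) (fun N => ?_)
      (tendsto_pow_atTop_nhds_zero_of_lt_one (by norm_num : (0 : ℝ) ≤ 1 / 2) (by norm_num))
    rw [← norm_neg, neg_sub, hS_err, norm_div, norm_pow, one_div_pow, RCLike.norm_ofNat]
    exact div_le_div_of_nonneg_right (hv_le N m hm) (by positivity)

theorem isI0Set_of_approx : IsI0Set E := by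
  rintro b ⟨C, hC⟩
  set D : ℝ := max C 1
  have hD : 0 < D := lt_of_lt_of_le one_pos (le_max_right _ _)
  obtain ⟨ψ, hψ, hψb⟩ := exists_almostPeriodic_eqOn_of_approx h (b := fun m => b m / D)
    fun m hm => by
    rw [norm_div, Complex.norm_real, Real.norm_of_nonneg hD.le, div_le_one hD]
    exact (hC m hm).trans (le_max_left _ _)
  refine ⟨fun n => D * ψ n, hψ.const_mul _, fun m hm => ?_⟩
  dsimp only
  rw [hψb m hm, mul_div_cancel₀ _ (Complex.ofReal_ne_zero.mpr hD.ne')]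

end Approximation

theorem exists_mem_Icc_mul_sub_eq_intCast {l : ℝ} (hl : 0 < l) (y θ : ℝ) :
    ∃ y' ∈ Set.Icc y (y + 1 / l), ∃ z : ℤ, l * y' - θ = z := by
  refine ⟨(⌈l * y - θ⌉ + θ) / l, ⟨?_, ?_⟩, ⌈l * y - θ⌉, by field_simp; ring⟩
  · rw [le_div_iff₀ hl]
    linarith [Int.le_ceil (l * y - θ)]
  · rw [div_le_iff₀ hl, add_mul, one_div_mul_cancel hl.ne']
    linarith [Int.ceil_lt_add_one (l * y - θ)]

theorem exists_forall_abs_mul_sub_sub_int_le_of_lacunary {l θ : ℕ → ℝ} {q : ℝ} (hq : 1 < q)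
    (hl : ∀ j, 0 < l j) (hlac : ∀ j, q * l j ≤ l (j + 1)) :
    ∃ x : ℝ, ∀ j, ∃ z : ℤ, |l j * x - θ j - z| ≤ 1 / (q - 1) := by
  choose step hstep hstep_int using fun j y => exists_mem_Icc_mul_sub_eq_intCast (hl j) y (θ j)
  let a : ℕ → ℝ := fun j => Nat.rec (step 0 0) (fun i y => step (i + 1) y) j
  set c := 1 / (q - 1)
  have hc : 0 < c := by have := sub_pos.mpr hq; positivity
  have hcq : 1 + c = c * q := by
    simp only [c]; field_simp [(sub_pos.mpr hq).ne']; ring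
  have ha_mono : Monotone a := monotone_nat_of_le_succ fun j => (hstep (j + 1) (a j)).1
  have ha_anti : Antitone fun j => a j + c / l j := by
    refine antitone_nat_of_succ_le fun j => ?_
    have h1 : (1 + c) / l (j + 1) ≤ c / l j := by
      rw [div_le_div_iff₀ (hl _) (hl _), hcq, mul_assoc]
      exact mul_le_mul_of_nonneg_left (by linarith [hlac j]) hc.le
    have h2 := (hstep (j + 1) (a j)).2
    change step (j + 1) (a j) + c / l (j + 1) ≤ a j + c / l j
    rw [add_div] at h1
    linarith
  have hle : a ≤ fun j => a j + c / l j := fun j =>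
    le_add_of_nonneg_right (by have := hl j; positivity)
  refine ⟨⨆ i, a i, fun j => ?_⟩
  obtain ⟨hlow, hup⟩ := Set.mem_iInter.mp (ha_mono.ciSup_mem_iInter_Icc_of_antitone ha_anti hle) j
  obtain ⟨z, hz⟩ : ∃ z : ℤ, l j * a j - θ j = z := by
    cases j with
    | zero => exact hstep_int 0 0
    | succ i => exact hstep_int (i + 1) (a i)
  refine ⟨z, abs_le.mpr ⟨?_, ?_⟩⟩
  · nlinarith [hl j]
  · have := mul_le_mul_of_nonneg_left hup (hl j).le
    rw [mul_add, mul_div_cancel₀ _ (hl j).ne'] at this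
    linarith

theorem norm_fourierChar_sub_le (x y : ℝ) (z : ℤ) :
    ‖(𝐞 x : ℂ) - 𝐞 y‖ ≤ 2 * π * |x - y - z| := by
  have hez : 𝐞 (z : ℝ) = 1 := by
    rw [fourierChar_apply', mul_comm]; exact Circle.exp_int_mul_two_pi z
  have hx : (𝐞 x : ℂ) = 𝐞 y * 𝐞 (x - y - z) := by
    rw [← Circle.coe_mul, ← AddChar.map_add_eq_mul,
      show x = y + (x - y - z) + z by ring, AddChar.map_add_eq_mul _ _ (z : ℝ), hez, mul_one]
    ring_nf
  rw [hx, ← mul_sub_one, norm_mul, Circle.norm_coe, one_mul, fourierChar_apply, mul_comm]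
  refine Real.norm_exp_I_mul_ofReal_sub_one_le.trans_eq ?_
  rw [Real.norm_eq_abs, abs_mul, abs_of_pos two_pi_pos]

def IsKronecker (ε : ℝ) (L : Set ℕ) : Prop :=
  ∀ u : ℕ → Circle, ∃ x : ℝ, ∀ m ∈ L, ‖(u m : ℂ) - character x m‖ ≤ ε

theorem IsKronecker.mono {ε ε' : ℝ} {L L' : Set ℕ} (h : IsKronecker ε L) (hε : ε ≤ ε')
    (hL : L' ⊆ L) : IsKronecker ε' L' := fun u => by
  obtain ⟨x, hx⟩ := h u
  exact ⟨x, fun m hm => (hx m (hL hm)).trans hε⟩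

theorem fourierChar_surjective : Surjective 𝐞 := fun u => by
  obtain ⟨s, rfl⟩ := Circle.exp_surjective u
  exact ⟨s / (2 * π), by rw [fourierChar_apply', mul_div_cancel₀ _ two_pi_pos.ne']⟩

theorem isKronecker_range_of_lacunary {l : ℕ → ℕ} {q : ℝ} (hq : 1 < q) (hl : ∀ j, 0 < l j)
    (hlac : ∀ j, q * l j ≤ l (j + 1)) : IsKronecker (2 * π / (q - 1)) (Set.range l) := by
  intro u
  choose θ hθ using fun m => fourierChar_surjective (u m)
  obtain ⟨x, hx⟩ := exists_forall_abs_mul_sub_sub_int_le_of_lacunary (θ := fun j => θ (l j)) hq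
    (fun j => Nat.cast_pos.mpr (hl j)) hlac
  refine ⟨x, Set.forall_mem_range.mpr fun j => ?_⟩
  obtain ⟨z, hz⟩ := hx j
  rw [← hθ, norm_sub_rev, character]
  calc _ ≤ 2 * π * |l j * x - θ (l j) - z| := norm_fourierChar_sub_le _ _ z
    _ ≤ 2 * π * (1 / (q - 1)) := by gcongr
    _ = 2 * π / (q - 1) := by ring

theorem isKronecker_of_lacunary {L : Set ℕ} {q : ℝ} (hq : 1 < q) (hL : L.Infinite) (h0 : 0 ∉ L)
    (hlac : ∀ m ∈ L, ∀ m' ∈ L, m < m' → q * m ≤ m') : IsKronecker (2 * π / (q - 1)) L := by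
  have hmem : ∀ j, Nat.nth (· ∈ L) j ∈ L := Nat.nth_mem_of_infinite hL
  have hrange : Set.range (Nat.nth (· ∈ L)) = L := Nat.range_nth_of_infinite hL
  rw [← hrange]
  refine isKronecker_range_of_lacunary hq (fun j => Nat.pos_of_ne_zero fun h => h0 ?_)
    fun j => hlac _ (hmem j) _ (hmem (j + 1)) (Nat.nth_strictMono hL j.lt_succ_self)
  simpa [h] using hmem j

theorem exists_eq_midpoint_circle {z : ℂ} (hz : ‖z‖ ≤ 1) : ∃ u v : Circle, z = (u + v) / 2 := by
  -- `z = ‖z‖ e^{i arg z}` and `‖z‖ = cos β` with `β = arccos ‖z‖`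
  set β := Real.arccos ‖z‖
  have hcos : (Real.cos β : ℂ) = ‖z‖ := by
    rw [Real.cos_arccos (by linarith [norm_nonneg z]) hz]
  refine ⟨Circle.exp (Complex.arg z + β), Circle.exp (Complex.arg z - β), ?_⟩
  conv_lhs => rw [← Complex.norm_mul_exp_arg_mul_I z, ← hcos, Complex.ofReal_cos, Complex.cos]
  simp only [Circle.coe_exp, Complex.ofReal_add, Complex.ofReal_sub, add_mul, sub_mul,
    Complex.exp_add, Complex.exp_sub, neg_mul, Complex.exp_neg]
  ring

theorem norm_midpoint_character_le (x y : ℝ) (m : ℕ) :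
    ‖(1 / 2 : ℂ) * (character x m + character y m)‖ ≤ 1 := by
  rw [norm_mul, character, character]
  calc ‖(1 / 2 : ℂ)‖ * ‖(𝐞 (m * x) : ℂ) + 𝐞 (m * y)‖ ≤ 1 / 2 * (1 + 1) := by
        gcongr
        · norm_num
        · exact (norm_add_le _ _).trans (by rw [Circle.norm_coe, Circle.norm_coe])
    _ = 1 := by norm_num

theorem exists_trigPoly_approx_of_isKronecker {ι : Type*} [Fintype ι] {E : Set ℕ}
    (S : ι → Set ℕ) (hE : E ⊆ ⋃ i, S i) (hS : Pairwise (Disjoint on S))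
    (hS_mem : ∀ i, (S i).indicator 1 ∈ trigPoly) (hK : ∀ i, IsKronecker (1 / 2) (E ∩ S i))
    (v : ℕ → ℂ) :
    ∃ P ∈ trigPoly, (∀ m, ‖P m‖ ≤ 1) ∧ ∀ m ∈ E, ‖v m‖ ≤ 1 → ‖v m - P m‖ ≤ 1 / 2 := by
  have hsplit : ∀ m, ∃ u₁ u₂ : Circle, ‖v m‖ ≤ 1 → v m = (u₁ + u₂) / 2 := fun m => by
    by_cases h : ‖v m‖ ≤ 1
    · obtain ⟨u₁, u₂, huv⟩ := exists_eq_midpoint_circle h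
      exact ⟨u₁, u₂, fun _ => huv⟩
    · exact ⟨1, 1, fun h' => absurd h' h⟩
  choose u₁ u₂ hu using hsplit
  choose x₁ hx₁ using fun i => hK i u₁
  choose x₂ hx₂ using fun i => hK i u₂
  let g : ι → ℕ → ℂ := fun i m => (1 / 2 : ℂ) * (character (x₁ i) m + character (x₂ i) m)
  let P : ℕ → ℂ := ∑ i, (S i).indicator 1 * g i
  have hP_eq : ∀ i, ∀ m ∈ S i, P m = g i m := fun i m hm => by
    simp only [P, Finset.sum_apply, Pi.mul_apply]
    rw [Finset.sum_eq_single i, Set.indicator_of_mem hm, Pi.one_apply, one_mul]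
    · intro j _ hji
      rw [Set.indicator_of_notMem (Set.disjoint_left.mp (hS hji.symm) hm), zero_mul]
    · exact fun hi => absurd (Finset.mem_univ i) hi
  refine ⟨P, ?_, fun m => ?_, fun m hm hvm => ?_⟩
  · refine sum_mem fun i _ => mul_mem_trigPoly (hS_mem i) ?_
    convert smul_mem _ (1 / 2 : ℂ) (add_mem (character_mem_trigPoly (x₁ i))
      (character_mem_trigPoly (x₂ i))) using 1
    exact funext fun m => rfl
  · by_cases h : ∃ i, m ∈ S i
    · obtain ⟨i, hi⟩ := h
      rw [hP_eq i m hi]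
      exact norm_midpoint_character_le _ _ m
    · simp [P, Set.indicator_of_notMem (not_exists.mp h _)]
  · obtain ⟨i, hi⟩ := Set.mem_iUnion.mp (hE hm)
    rw [hP_eq i m hi, hu m hvm]
    have h₁ := hx₁ i m ⟨hm, hi⟩
    have h₂ := hx₂ i m ⟨hm, hi⟩
    calc ‖((u₁ m : ℂ) + u₂ m) / 2 - g i m‖
        = ‖(u₁ m - character (x₁ i) m) + (u₂ m - character (x₂ i) m)‖ / 2 := by
          rw [← RCLike.norm_ofNat (K := ℂ) 2, ← norm_div]
          congr 1
          simp only [g]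
          ring
      _ ≤ (1 / 2 + 1 / 2) / 2 := by gcongr; exact (norm_add_le _ _).trans (add_le_add h₁ h₂)
      _ = 1 / 2 := by norm_num

theorem indicator_mem_trigPoly {S : Set ℕ} {q : ℕ} [NeZero q] (hS : ∀ m, m + q ∈ S ↔ m ∈ S) :
    S.indicator 1 ∈ trigPoly :=
  periodic_mem_trigPoly (q := q) fun m => by by_cases h : m ∈ S <;> simp [h, hS]

theorem two_pow_mod_127 (n : ℕ) : 2 ^ n % 127 = 2 ^ (n % 7) % 127 := by
  conv_lhs => rw [← Nat.mod_add_div n 7, pow_add, pow_mul, Nat.mul_mod, Nat.pow_mod (2 ^ 7)]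
  norm_num

theorem two_pow_mod_127_injective : Injective fun r : Fin 7 => 2 ^ (r : ℕ) % 127 := by
  decide

theorem two_pow_add_two_mul_sub_one_mod_two {n : ℕ} (hn : 0 < n) :
    (2 ^ n + 2 * n - 1) % 2 = 1 := by
  obtain ⟨k, hk⟩ := dvd_pow_self 2 hn.ne'
  omega

theorem add_seven_le_of_two_pow_add_two_mul_sub_one_modEq {n n' : ℕ} (hn : 0 < n) (hnn' : n < n')
    (hmod : (2 ^ n + 2 * n - 1) % 256 = (2 ^ n' + 2 * n' - 1) % 256) : n + 7 ≤ n' := by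
  by_contra! hlt
  rcases Nat.lt_or_ge n 8 with h8 | h8
  · interval_cases n <;> interval_cases n' <;> simp_all
  · -- past `n = 8` the powers vanish mod 256, so `2 * n ≡ 2 * n'` and `n' ≥ n + 128`
    obtain ⟨k, hk⟩ := pow_dvd_pow 2 h8
    obtain ⟨k', hk'⟩ := pow_dvd_pow 2 (h8.trans hnn'.le)
    have := Nat.one_le_two_pow (n := n)
    rw [hk, hk'] at hmod
    omega

theorem lacunary_two_pow_add_two_mul_sub_one {n n' : ℕ} (hn : 0 < n) (hnn' : n < n')
    (hmod : (2 ^ n + 2 * n - 1) % 256 = (2 ^ n' + 2 * n' - 1) % 256) :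
    33 * (2 ^ n + 2 * n - 1) ≤ 2 ^ n' + 2 * n' - 1 := by
  have h7 := add_seven_le_of_two_pow_add_two_mul_sub_one_modEq hn hnn' hmod
  have hpow : 2 ^ n * 2 ^ 7 ≤ 2 ^ n' := pow_add 2 n 7 ▸ Nat.pow_le_pow_right two_pos h7
  have := n.lt_two_pow_self
  omega

def powTwoUnion : Set ℕ :=
  {m | ∃ n, 0 < n ∧ m = 2 ^ n} ∪ {m | ∃ n, 0 < n ∧ m = 2 ^ n + 2 * n - 1}

theorem exists_eq_two_pow_of_mem_powTwoUnion {m : ℕ} (hm : m ∈ powTwoUnion) (h2 : m % 2 = 0) :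
    ∃ n, 0 < n ∧ m = 2 ^ n := by
  rcases hm with hm | ⟨n, hn, rfl⟩
  · exact hm
  · have := two_pow_add_two_mul_sub_one_mod_two hn
    omega

theorem exists_eq_two_pow_add_of_mem_powTwoUnion {m : ℕ} (hm : m ∈ powTwoUnion)
    (h2 : m % 2 = 1) : ∃ n, 0 < n ∧ m = 2 ^ n + 2 * n - 1 := by
  rcases hm with ⟨n, hn, rfl⟩ | hm
  · obtain ⟨k, hk⟩ := dvd_pow_self 2 hn.ne'
    omega
  · exact hm

/-- The powers `2 ^ n` are sorted by `n % 7`, which `2 ^ n % 127` detects since `2 ^ 7 ≡ 1`;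
the odd elements `2 ^ n + 2 * n - 1` by their residue mod `256`. -/
def separatingClass : Fin 7 ⊕ Fin 128 → Set ℕ :=
  Sum.elim (fun r => {m | m % 2 = 0 ∧ m % 127 = 2 ^ (r : ℕ) % 127})
    (fun k => {m | m % 256 = 2 * k + 1})

theorem pairwise_disjoint_separatingClass : Pairwise (Disjoint on separatingClass) := by
  rintro (r | k) (r' | k') hne <;> refine Set.disjoint_left.mpr fun m hm hm' => hne ?_ <;>
    simp only [separatingClass, Sum.elim_inl, Sum.elim_inr, Set.mem_ofPred_eq] at hm hm'
  · exact congrArg Sum.inl (two_pow_mod_127_injective (hm.2.symm.trans hm'.2))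
  · omega
  · omega
  · exact congrArg Sum.inr (Fin.ext (by omega))

theorem indicator_separatingClass_mem_trigPoly (i : Fin 7 ⊕ Fin 128) :
    (separatingClass i).indicator 1 ∈ trigPoly := by
  rcases i with r | k
  · exact indicator_mem_trigPoly (q := 254) fun m => by simp [separatingClass]; omega
  · exact indicator_mem_trigPoly (q := 256) fun m => by simp [separatingClass]

theorem powTwoUnion_subset_iUnion_separatingClass :
    powTwoUnion ⊆ ⋃ i, separatingClass i := by
  intro m hm
  rcases Nat.mod_two_eq_zero_or_one m with h2 | h2
  · obtain ⟨n, hn, rfl⟩ := exists_eq_two_pow_of_mem_powTwoUnion hm h2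
    refine Set.mem_iUnion.mpr ⟨Sum.inl ⟨n % 7, Nat.mod_lt _ (by norm_num)⟩, h2, ?_⟩
    exact two_pow_mod_127 n
  · refine Set.mem_iUnion.mpr ⟨Sum.inr ⟨m % 256 / 2, by omega⟩, ?_⟩
    simp only [separatingClass, Sum.elim_inr, Set.mem_ofPred_eq]
    omega

theorem isKronecker_powTwoUnion_inter_separatingClass_inl (r : Fin 7) :
    IsKronecker (1 / 2) (powTwoUnion ∩ separatingClass (Sum.inl r)) := by
  have hK := isKronecker_range_of_lacunary (l := fun j => 2 ^ (7 * j + r)) (q := 128)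
    (by norm_num) (fun j => Nat.two_pow_pos _) fun j => le_of_eq (by push_cast; ring)
  refine hK.mono (by nlinarith [pi_le_four]) fun m ⟨hm, h2, h127⟩ => ?_
  obtain ⟨n, -, rfl⟩ := exists_eq_two_pow_of_mem_powTwoUnion hm h2
  have hr : n % 7 = r := congrArg Fin.val (two_pow_mod_127_injective
    (a₁ := ⟨n % 7, Nat.mod_lt _ (by norm_num)⟩) ((two_pow_mod_127 n).symm.trans h127))
  exact ⟨n / 7, by rw [← hr]; exact congrArg (2 ^ ·) (Nat.div_add_mod n 7)⟩

theorem isKronecker_powTwoUnion_inter_separatingClass_inr (k : Fin 128) :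
    IsKronecker (1 / 2) (powTwoUnion ∩ separatingClass (Sum.inr k)) := by
  have hodd : ∀ m ∈ powTwoUnion ∩ separatingClass (Sum.inr k),
      ∃ n, 0 < n ∧ m = 2 ^ n + 2 * n - 1 ∧ m % 256 = 2 * k + 1 := fun m ⟨hm, hk⟩ => by
    change m % 256 = 2 * k + 1 at hk
    obtain ⟨n, hn, rfl⟩ := exists_eq_two_pow_add_of_mem_powTwoUnion hm (by omega)
    exact ⟨n, hn, rfl, hk⟩
  refine (isKronecker_of_lacunary (q := 33) (by norm_num) ?_ ?_ ?_).mono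
    (by nlinarith [pi_le_four]) le_rfl
  · refine Set.infinite_of_forall_exists_gt fun a => ?_
    -- beyond `n = 8`, `2 ^ n + 2 * n - 1 ≡ 2 * n - 1 (mod 256)`
    set n := k + 1 + 128 * (a + 1)
    obtain ⟨c, hc⟩ := pow_dvd_pow 2 (show 8 ≤ n by omega)
    have := n.lt_two_pow_self
    refine ⟨2 ^ n + 2 * n - 1, ⟨Or.inr ⟨n, by omega, rfl⟩, ?_⟩, by omega⟩
    change _ % 256 = _
    omega
  · intro h0
    obtain ⟨n, -, -, h⟩ := hodd 0 h0
    omega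
  · intro m hm m' hm' hlt
    obtain ⟨n, hn, rfl, hk⟩ := hodd m hm
    obtain ⟨n', -, rfl, hk'⟩ := hodd m' hm'
    have hnn' : n < n' := by
      by_contra! h
      have := Nat.pow_le_pow_right two_pos h
      omega
    exact_mod_cast lacunary_two_pow_add_two_mul_sub_one hn hnn' (hk.trans hk'.symm)

end

theorem union_pow_two_is_I0 :
    IsI0Set ({m : ℕ | ∃ n : ℕ, 0 < n ∧ m = 2 ^ n} ∪
      {m : ℕ | ∃ n : ℕ, 0 < n ∧ m = 2 ^ n + 2 * n - 1}) :=
  isI0Set_of_approx <| exists_trigPoly_approx_of_isKronecker separatingClass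
    powTwoUnion_subset_iUnion_separatingClass pairwise_disjoint_separatingClass
    indicator_separatingClass_mem_trigPoly
    (Sum.rec isKronecker_powTwoUnion_inter_separatingClass_inl
      isKronecker_powTwoUnion_inter_separatingClass_inr)
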